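/- Let (G,I) be an indecomposable 3-transposition group with I finite and let k be the common valency of the graph on I (the number of j ∈ I with ord(ij)=3, independent of i). Then in the Matsuo algebra B(G), the element ω = (8/(k+8)) Σ_{i∈I} x^i satisfies ω·v = 2v for all v ∈ B(G). -/

import Mathlib

/-!
Write `xⁱ` for the basis vector `Pi.single i 1` and `1 = ∑ᵢ xⁱ`. By bilinearity `1 · v = ∑ⱼ vⱼ ∑ᵢ xⁱ · xʲ`,
so it suffices to compute the column sums `∑ᵢ xⁱ · xʲ`. Besides `xʲ · xʲ = 2xʲ`, each of the `k`
neighbours `i` of `j` contributes `(xⁱ + xʲ - x^{iji})/4`, and `i ↦ iji` permutes the neighbours of `j`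
(as `(ij)³ = 1` gives `(iji)·j·(iji) = i`), so the `xⁱ` and `x^{iji}` terms cancel. Hence
`∑ᵢ xⁱ · xʲ = (2 + k/4) xʲ`, i.e. `1 · v = (2 + k/4) v`, and `(8/(k+8)) (2 + k/4) = 2`.
-/

open Finset

section Group

variable {G : Type*} [Group G] {a b : G}

theorem orderOf_mul_comm (a b : G) : orderOf (b * a) = orderOf (a * b) :=
  SemiconjBy.orderOf_eq a (mul_assoc a b a).symm

theorem mul_mul_mul_mul_eq_inv_of_pow_three (h : (a * b) ^ 3 = 1) :
    a * b * a * b = (a * b)⁻¹ := by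
  rw [eq_inv_iff_mul_eq_one, ← h]
  simp only [pow_succ, pow_zero, one_mul, mul_assoc]

theorem mul_mul_mul_mul_mul_mul_eq_self_of_pow_three (h : (a * b) ^ 3 = 1) :
    a * b * a * b * (a * b * a) = a := by
  rw [mul_mul_mul_mul_eq_inv_of_pow_three h]
  group

end Group

section Matsuo

variable (K : Type*) {ι : Type*} [Field K] [Fintype ι] [DecidableEq ι]
  (adj : ι → ι → Prop) [DecidableRel adj] (circ : ι → ι → ι)

/-- `xⁱ · xʲ` in the Matsuo algebra, `adj i j` standing for `ord(ij) = 3` and `circ i j`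
for `iji`. -/
def matsuoBasisMul (i j : ι) : ι → K :=
  if i = j then (2 : K) • Pi.single i 1
  else if adj i j then (4 : K)⁻¹ • (Pi.single i 1 + Pi.single j 1 - Pi.single (circ i j) 1)
  else 0

def matsuoMul (f g : ι → K) : ι → K :=
  ∑ i, ∑ j, (f i * g j) • matsuoBasisMul K adj circ i j

variable {K adj circ}

theorem sum_single_circ_eq_sum_single (hadj : ∀ i j, adj i j → adj (circ i j) j)
    (hinvol : ∀ i j, adj i j → circ (circ i j) j = i) (j : ι) :
    ∑ i with adj i j, (Pi.single (circ i j) 1 : ι → K) = ∑ i with adj i j, Pi.single i 1 := by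
  refine sum_nbij' (circ · j) (circ · j) ?_ ?_ ?_ ?_ fun _ _ => rfl
    <;> simp only [mem_filter, mem_univ, true_and]
  exacts [(hadj · j), (hadj · j), (hinvol · j), (hinvol · j)]

theorem sum_matsuoBasisMul (hirrefl : ∀ j, ¬ adj j j) (hadj : ∀ i j, adj i j → adj (circ i j) j)
    (hinvol : ∀ i j, adj i j → circ (circ i j) j = i) (j : ι) :
    ∑ i, matsuoBasisMul K adj circ i j = (2 + (#{i | adj i j} : K) / 4) • Pi.single j 1 := by
  have hsplit : ∀ i, matsuoBasisMul K adj circ i j =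
      (if i = j then (2 : K) • Pi.single i 1 else 0) +
        if adj i j then (4 : K)⁻¹ • (Pi.single i 1 + Pi.single j 1 - Pi.single (circ i j) 1)
        else 0 := by
    intro i
    unfold matsuoBasisMul
    by_cases hij : i = j
    · subst hij
      simp [hirrefl]
    · simp [hij]
  simp_rw [hsplit, sum_add_distrib, sum_ite_eq', mem_univ, if_true, ← sum_filter, ← smul_sum,
    sum_sub_distrib, sum_add_distrib, sum_const, sum_single_circ_eq_sum_single hadj hinvol,
    add_sub_cancel_left, ← Nat.cast_smul_eq_nsmul K, smul_smul, ← add_smul]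
  congr 1
  ring

theorem matsuoMul_smul_one (hirrefl : ∀ j, ¬ adj j j) (hadj : ∀ i j, adj i j → adj (circ i j) j)
    (hinvol : ∀ i j, adj i j → circ (circ i j) j = i) {k : ℕ} (hk : ∀ j, #{i | adj i j} = k)
    (c : K) (v : ι → K) :
    matsuoMul K adj circ (c • 1) v = (c * (2 + k / 4)) • v := by
  simp only [matsuoMul, Pi.smul_apply, Pi.one_apply, smul_eq_mul, mul_one]
  rw [sum_comm]
  simp_rw [← smul_sum, sum_matsuoBasisMul hirrefl hadj hinvol, hk, smul_smul]
  ext x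
  simp only [Finset.sum_apply, Pi.smul_apply, Pi.single_apply, smul_eq_mul, mul_ite, mul_one,
    mul_zero, sum_ite_eq, mem_univ, if_true]
  ring

end Matsuo

theorem stmt_5_general {G : Type*} [Group G] [DecidableEq G] (I : Set G) [Fintype I]
    (hinv : ∀ a ∈ I, a * a = 1 ∧ a ≠ 1)
    (circ : I → I → I) (hcirc : ∀ i j : I, (circ i j : G) = (i : G) * j * i)
    (mul : (I → ℂ) → (I → ℂ) → (I → ℂ))
    (hmul : ∀ f g : I → ℂ, mul f g = ∑ i : I, ∑ j : I, (f i * g j) •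
      (if i = j then ((2 : ℂ) • (Pi.single i (1 : ℂ) : I → ℂ))
       else if orderOf ((i : G) * (j : G)) = 3 then
         ((4 : ℂ)⁻¹ • ((Pi.single i (1 : ℂ) : I → ℂ) + (Pi.single j (1 : ℂ) : I → ℂ)
            - (Pi.single (circ i j) (1 : ℂ) : I → ℂ)))
       else (0 : I → ℂ)))
    (k : ℕ)
    (hk : ∀ i : I, (Finset.univ.filter (fun j : I => orderOf ((i : G) * (j : G)) = 3)).card = k) :
    ∀ v : I → ℂ,
      mul (((8 : ℂ) / ((k : ℂ) + 8)) • ∑ i : I, (Pi.single i (1 : ℂ) : I → ℂ)) v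
        = (2 : ℂ) • v := by
  intro v
  have hpow (i j : I) (h : orderOf ((i : G) * j) = 3) : ((i : G) * j) ^ 3 = 1 :=
    h ▸ pow_orderOf_eq_one _
  have hirrefl (j : I) : orderOf ((j : G) * j) ≠ 3 := by simp [(hinv j j.2).1]
  have hadj (i j : I) (h : orderOf ((i : G) * j) = 3) : orderOf ((circ i j : G) * j) = 3 := by
    rw [hcirc, mul_mul_mul_mul_eq_inv_of_pow_three (hpow i j h), orderOf_inv, h]
  have hinvol (i j : I) (h : orderOf ((i : G) * j) = 3) : circ (circ i j) j = i := by
    ext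
    rw [hcirc, hcirc]
    exact mul_mul_mul_mul_mul_mul_eq_self_of_pow_three (hpow i j h)
  have hdeg (j : I) : #{i : I | orderOf ((i : G) * j) = 3} = k := by
    simpa only [orderOf_mul_comm (j : G)] using hk j
  have hk8 : (k : ℂ) + 8 ≠ 0 := by exact_mod_cast (k + 7).succ_ne_zero
  have hmatsuo : mul = matsuoMul ℂ (fun i j : I => orderOf ((i : G) * j) = 3) circ :=
    funext fun f => funext fun g => hmul f g
  have hone : ∑ i : I, (Pi.single i (1 : ℂ) : I → ℂ) = 1 := univ_sum_single 1
  rw [hmatsuo, hone, matsuoMul_smul_one hirrefl hadj hinvol hdeg]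
  congr 1
  field_simp
  ring

/-- Let `(G, I)` be an indecomposable 3-transposition group with `I` finite of common
valency `k`.  Then in the Matsuo algebra `B(G)`, the element `ω = (8/(k+8)) ∑_{i ∈ I} xⁱ`
satisfies `ω · v = 2v` for all `v ∈ B(G)`. -/
theorem stmt_5 {G : Type*} [Group G] [DecidableEq G] (I : Set G) [Fintype I]
    (hinv : ∀ a ∈ I, a * a = 1 ∧ a ≠ 1)
    (hgen : Subgroup.closure I = ⊤)
    (hconj : ∀ g : G, ∀ a ∈ I, g * a * g⁻¹ ∈ I)
    (hord : ∀ a ∈ I, ∀ b ∈ I, orderOf (a * b) ≤ 3)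
    (circ : I → I → I) (hcirc : ∀ i j : I, (circ i j : G) = (i : G) * j * i)
    (mul : (I → ℂ) → (I → ℂ) → (I → ℂ))
    (hmul : ∀ f g : I → ℂ, mul f g = ∑ i : I, ∑ j : I, (f i * g j) •
      (if i = j then ((2 : ℂ) • (Pi.single i (1 : ℂ) : I → ℂ))
       else if orderOf ((i : G) * (j : G)) = 3 then
         ((4 : ℂ)⁻¹ • ((Pi.single i (1 : ℂ) : I → ℂ) + (Pi.single j (1 : ℂ) : I → ℂ)
            - (Pi.single (circ i j) (1 : ℂ) : I → ℂ)))
       else (0 : I → ℂ)))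
    (hconn : ∀ a ∈ I, ∀ b ∈ I, IsConj a b)
    (k : ℕ)
    (hk : ∀ i : I, (Finset.univ.filter (fun j : I => orderOf ((i : G) * (j : G)) = 3)).card = k) :
    ∀ v : I → ℂ,
      mul (((8 : ℂ) / ((k : ℂ) + 8)) • ∑ i : I, (Pi.single i (1 : ℂ) : I → ℂ)) v
        = (2 : ℂ) • v :=
  stmt_5_general I hinv circ hcirc mul hmul k hk
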